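/- arXiv:cs/0601016 — 3 statements merged into one kernel-verified Lean document; each statement's English description precedes it below -/
import Mathlib

section
/- Let f : S → ℝ be bounded measurable and let B be a nonnegative random variable with E[B^2] < ∞, independent of the process X. Then (1/2) E[(∫_0^B f(X(s)) ds)^2] = E[∫_0^B (B − v) c_f(v) dv], where c_f(v) = E[f(X(0)) f(X(v))]. -/
/-!
Squaring the time integral and applying Fubini turns the left side into an integral over the
random square `(0, B]²` of `f (X u) f (X v)`. Swapping the `ω`- and `(u, v)`-integrals, the
inner expectation over `{ω | (u, v) ∈ (0, B ω]²}`, an event in `σ(B)`, factors by independence,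
and two-point stationarity replaces `E[f (X u) f (X v)]` by `c_f |u - v|`. Swapping back leaves
the deterministic identity `∫∫_{(0, b]²} c |u - v| = 2 ∫_0^b (b - v) c v`.
-/

open MeasureTheory ProbabilityTheory Set Function

section Deterministic

variable {c : ℝ → ℝ} {M : ℝ}

lemma volume_Ioc_prod_Ioc {b : ℝ} (hb : 0 ≤ b) :
    (volume : Measure (ℝ × ℝ)) (Ioc 0 b ×ˢ Ioc 0 b) = ENNReal.ofReal (b ^ 2) := by
  rw [Measure.volume_eq_prod, Measure.prod_prod, Real.volume_Ioc, sub_zero,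
    ← ENNReal.ofReal_mul hb, sq]

lemma intervalIntegrable_of_abs_le (hc : Measurable c) (hM : ∀ v, |c v| ≤ M) (a b : ℝ) :
    IntervalIntegrable c volume a b :=
  intervalIntegrable_iff.2 <|
    .of_bound measure_Ioc_lt_top hc.aestronglyMeasurable M (.of_forall hM)

lemma integral_integral_eq_integral_sub_mul (hc : Measurable c) (hM : ∀ v, |c v| ≤ M)
    {b : ℝ} (hb : 0 ≤ b) :
    ∫ u in (0 : ℝ)..b, (∫ w in (0 : ℝ)..u, c w) = ∫ w in (0 : ℝ)..b, (b - w) * c w := by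
  simp only [intervalIntegral.integral_of_le hb]
  have hmeas : Measurable (uncurry fun u w => (Iic u).indicator c w) :=
    (hc.comp measurable_snd).indicator (measurableSet_le measurable_snd measurable_fst)
  have hint : Integrable (uncurry fun u w => (Iic u).indicator c w)
      ((volume.restrict (Ioc 0 b)).prod (volume.restrict (Ioc 0 b))) := by
    rw [Measure.prod_restrict]
    exact IntegrableOn.of_bound ((volume_Ioc_prod_Ioc hb).trans_lt ENNReal.ofReal_lt_top)
      hmeas.aestronglyMeasurable M
      (.of_forall fun _ => (norm_indicator_le_norm_self c _).trans (hM _))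
  calc ∫ u in Ioc 0 b, ∫ w in (0 : ℝ)..u, c w
      = ∫ u in Ioc 0 b, ∫ w in Ioc 0 b, (Iic u).indicator c w := by
        refine setIntegral_congr_fun measurableSet_Ioc fun u hu => ?_
        rw [setIntegral_indicator measurableSet_Iic, Ioc_inter_Iic, min_eq_right hu.2,
          intervalIntegral.integral_of_le hu.1.le]
    _ = ∫ w in Ioc 0 b, ∫ u in Ioc 0 b, (Iic u).indicator c w := integral_integral_swap hint
    _ = ∫ w in Ioc 0 b, (b - w) * c w := by
        refine setIntegral_congr_fun measurableSet_Ioc fun w hw => ?_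
        have hswap : ∀ u, (Iic u).indicator c w = (Ici w).indicator (fun _ => c w) u :=
          fun u => rfl
        have hset : Ioc 0 b ∩ Ici w = Icc w b :=
          ext fun u => ⟨fun h => ⟨h.2, h.1.2⟩, fun h => ⟨⟨hw.1.trans_le h.1, h.2⟩, h.1⟩⟩
        simp only [hswap]
        rw [setIntegral_indicator measurableSet_Ici, setIntegral_const, smul_eq_mul, hset,
          Real.volume_real_Icc_of_le hw.2]

lemma integral_integral_abs_sub (hc : Measurable c) (hM : ∀ v, |c v| ≤ M) {b : ℝ} (hb : 0 ≤ b) :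
    ∫ u in (0 : ℝ)..b, (∫ v in (0 : ℝ)..b, c |u - v|)
      = 2 * ∫ v in (0 : ℝ)..b, (b - v) * c v := by
  set F : ℝ → ℝ := fun u => ∫ w in (0 : ℝ)..u, c w
  have hF : Continuous F :=
    intervalIntegral.continuous_primitive (intervalIntegrable_of_abs_le hc hM) 0
  have hsplit : ∀ u ∈ uIcc 0 b, ∫ v in (0 : ℝ)..b, c |u - v| = F u + F (b - u) := by
    intro u hu
    rw [uIcc_of_le hb] at hu
    have hcu : Measurable fun v => c |u - v| := hc.comp (measurable_const.sub measurable_id).abs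
    have hleft : ∫ v in (0 : ℝ)..u, c |u - v| = F u := by
      rw [intervalIntegral.integral_congr (g := fun v => c (u - v)) fun v hv => ?_]
      · simp [F]
      · rw [uIcc_of_le hu.1] at hv
        simp only [abs_of_nonneg (sub_nonneg.2 hv.2)]
    have hright : ∫ v in u..b, c |u - v| = F (b - u) := by
      rw [intervalIntegral.integral_congr (g := fun v => c (v - u)) fun v hv => ?_]
      · simp [F]
      · rw [uIcc_of_le hu.2] at hv
        simp only [abs_sub_comm u v, abs_of_nonneg (sub_nonneg.2 hv.1)]
    rw [← intervalIntegral.integral_add_adjacent_intervals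
      (intervalIntegrable_of_abs_le hcu (fun _ => hM _) 0 u)
      (intervalIntegrable_of_abs_le hcu (fun _ => hM _) u b), hleft, hright]
  calc ∫ u in (0 : ℝ)..b, (∫ v in (0 : ℝ)..b, c |u - v|)
      = ∫ u in (0 : ℝ)..b, (F u + F (b - u)) := intervalIntegral.integral_congr hsplit
    _ = (∫ u in (0 : ℝ)..b, F u) + ∫ u in (0 : ℝ)..b, F (b - u) :=
        intervalIntegral.integral_add (hF.intervalIntegrable 0 b)
          ((hF.comp (continuous_const.sub continuous_id)).intervalIntegrable 0 b)
    _ = 2 * ∫ u in (0 : ℝ)..b, F u := by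
        rw [intervalIntegral.integral_comp_sub_left, sub_self, sub_zero]
        ring
    _ = 2 * ∫ v in (0 : ℝ)..b, (b - v) * c v := by
        rw [integral_integral_eq_integral_sub_mul hc hM hb]

lemma setIntegral_Ioc_prod_abs_sub (hc : Measurable c) (hM : ∀ v, |c v| ≤ M) {b : ℝ}
    (hb : 0 ≤ b) :
    ∫ p in Ioc 0 b ×ˢ Ioc 0 b, c |p.1 - p.2| = 2 * ∫ v in (0 : ℝ)..b, (b - v) * c v := by
  have hint : IntegrableOn (fun p : ℝ × ℝ => c |p.1 - p.2|) (Ioc 0 b ×ˢ Ioc 0 b)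
      (volume.prod volume) :=
    .of_bound ((volume_Ioc_prod_Ioc hb).trans_lt ENNReal.ofReal_lt_top)
      (hc.comp (measurable_fst.sub measurable_snd).abs).aestronglyMeasurable M
      (.of_forall fun _ => hM _)
  rw [Measure.volume_eq_prod, setIntegral_prod _ hint, ← integral_integral_abs_sub hc hM hb]
  simp only [intervalIntegral.integral_of_le hb]

lemma sq_intervalIntegral_eq_setIntegral_Ioc_prod (g : ℝ → ℝ) {b : ℝ} (hb : 0 ≤ b) :
    (∫ s in (0 : ℝ)..b, g s) ^ 2 = ∫ p in Ioc 0 b ×ˢ Ioc 0 b, g p.1 * g p.2 := by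
  rw [intervalIntegral.integral_of_le hb, sq, Measure.volume_eq_prod, setIntegral_prod_mul]

end Deterministic

section RandomSquare

variable {Ω : Type*} [MeasurableSpace Ω] {P : Measure Ω} {B : Ω → ℝ}

lemma measurableSet_setOf_mem_Ioc_prod (hB : Measurable B) :
    MeasurableSet {x : Ω × (ℝ × ℝ) | x.2 ∈ Ioc 0 (B x.1) ×ˢ Ioc 0 (B x.1)} := by
  have h₁ : Measurable fun x : Ω × (ℝ × ℝ) => x.2.1 := measurable_snd.fst
  have h₂ : Measurable fun x : Ω × (ℝ × ℝ) => x.2.2 := measurable_snd.snd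
  have hB' : Measurable fun x : Ω × (ℝ × ℝ) => B x.1 := hB.comp measurable_fst
  exact ((measurableSet_lt measurable_const h₁).inter (measurableSet_le h₁ hB')).inter
    ((measurableSet_lt measurable_const h₂).inter (measurableSet_le h₂ hB'))

lemma prod_setOf_mem_Ioc_prod_lt_top [SFinite P] (hB : Measurable B) (hB0 : ∀ ω, 0 ≤ B ω)
    (hB2 : Integrable (fun ω => B ω ^ 2) P) :
    P.prod volume {x : Ω × (ℝ × ℝ) | x.2 ∈ Ioc 0 (B x.1) ×ˢ Ioc 0 (B x.1)} < ⊤ := by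
  rw [Measure.prod_apply (measurableSet_setOf_mem_Ioc_prod hB)]
  simp only [preimage_ofPred_eq, ofPred_mem_eq, volume_Ioc_prod_Ioc (hB0 _)]
  exact hB2.lintegral_lt_top

lemma integral_setIntegral_Ioc_prod_swap [SFinite P] (hB : Measurable B) (hB0 : ∀ ω, 0 ≤ B ω)
    (hB2 : Integrable (fun ω => B ω ^ 2) P) {H : Ω → ℝ × ℝ → ℝ} (hH : Measurable (uncurry H))
    {M : ℝ} (hM : ∀ ω p, |H ω p| ≤ M) :
    ∫ ω, (∫ p in Ioc 0 (B ω) ×ˢ Ioc 0 (B ω), H ω p) ∂P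
      = ∫ p, ∫ ω in {ω | p ∈ Ioc 0 (B ω) ×ˢ Ioc 0 (B ω)}, H ω p ∂P := by
  set A := {x : Ω × (ℝ × ℝ) | x.2 ∈ Ioc 0 (B x.1) ×ˢ Ioc 0 (B x.1)}
  have hA : MeasurableSet A := measurableSet_setOf_mem_Ioc_prod hB
  have hint : Integrable (uncurry fun ω p => A.indicator (uncurry H) (ω, p)) (P.prod volume) :=
    (integrable_indicator_iff hA).2 <| .of_bound (prod_setOf_mem_Ioc_prod_lt_top hB hB0 hB2)
      hH.aestronglyMeasurable M (.of_forall fun _ => hM _ _)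
  calc ∫ ω, (∫ p in Ioc 0 (B ω) ×ˢ Ioc 0 (B ω), H ω p) ∂P
      = ∫ ω, (∫ p, A.indicator (uncurry H) (ω, p)) ∂P := by
        refine integral_congr_ae (.of_forall fun ω => ?_)
        exact (integral_indicator (measurableSet_Ioc.prod measurableSet_Ioc)).symm
    _ = ∫ p, ∫ ω, A.indicator (uncurry H) (ω, p) ∂P := integral_integral_swap hint
    _ = ∫ p, ∫ ω in {ω | p ∈ Ioc 0 (B ω) ×ˢ Ioc 0 (B ω)}, H ω p ∂P := by
        refine integral_congr_ae (.of_forall fun p => ?_)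
        exact integral_indicator (hA.preimage (measurable_id.prodMk measurable_const))

lemma integral_setIntegral_Ioc_prod_congr [SFinite P] (hB : Measurable B)
    (hB0 : ∀ ω, 0 ≤ B ω) (hB2 : Integrable (fun ω => B ω ^ 2) P) {H₁ H₂ : Ω → ℝ × ℝ → ℝ}
    (hH₁ : Measurable (uncurry H₁)) (hH₂ : Measurable (uncurry H₂)) {M : ℝ}
    (hM₁ : ∀ ω p, |H₁ ω p| ≤ M) (hM₂ : ∀ ω p, |H₂ ω p| ≤ M)
    (h : ∀ p : ℝ × ℝ, 0 < p.1 → 0 < p.2 →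
      ∫ ω in {ω | p ∈ Ioc 0 (B ω) ×ˢ Ioc 0 (B ω)}, H₁ ω p ∂P
        = ∫ ω in {ω | p ∈ Ioc 0 (B ω) ×ˢ Ioc 0 (B ω)}, H₂ ω p ∂P) :
    ∫ ω, (∫ p in Ioc 0 (B ω) ×ˢ Ioc 0 (B ω), H₁ ω p) ∂P
      = ∫ ω, (∫ p in Ioc 0 (B ω) ×ˢ Ioc 0 (B ω), H₂ ω p) ∂P := by
  rw [integral_setIntegral_Ioc_prod_swap hB hB0 hB2 hH₁ hM₁,
    integral_setIntegral_Ioc_prod_swap hB hB0 hB2 hH₂ hM₂]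
  refine integral_congr_ae (.of_forall fun p => ?_)
  by_cases hp : 0 < p.1 ∧ 0 < p.2
  · exact h p hp.1 hp.2
  · have : {ω | p ∈ Ioc 0 (B ω) ×ˢ Ioc 0 (B ω)} = ∅ :=
      eq_empty_of_forall_notMem fun ω hω => hp ⟨hω.1.1, hω.2.1⟩
    simp only [this, Measure.restrict_empty, integral_zero_measure]

end RandomSquare

section StationaryProcess

variable {Ω S : Type*} {m mΩ : MeasurableSpace Ω} [MeasurableSpace S] {P : Measure Ω}
  {X : ℝ → Ω → S} {f : S → ℝ}

lemma integral_mul_comp_eq_abs_sub (hX : ∀ t, Measurable (X t))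
    (hXstat : ∀ u v : ℝ, 0 ≤ u → u ≤ v →
      P.map (fun ω => (X u ω, X v ω)) = P.map (fun ω => (X 0 ω, X (v - u) ω)))
    (hf : Measurable f) {u v : ℝ} (hu : 0 ≤ u) (hv : 0 ≤ v) :
    ∫ ω, f (X u ω) * f (X v ω) ∂P = ∫ ω, f (X 0 ω) * f (X |u - v| ω) ∂P := by
  wlog huv : u ≤ v generalizing u v
  · simp_rw [mul_comm (f (X u _)), abs_sub_comm u v]
    exact this hv hu (le_of_not_ge huv)
  have hφ : Measurable fun q : S × S => f q.1 * f q.2 :=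
    (hf.comp measurable_fst).mul (hf.comp measurable_snd)
  rw [abs_sub_comm, abs_of_nonneg (sub_nonneg.2 huv),
    ← integral_map ((hX u).prodMk (hX v)).aemeasurable hφ.aestronglyMeasurable, hXstat u v hu huv,
    integral_map ((hX 0).prodMk (hX (v - u))).aemeasurable hφ.aestronglyMeasurable]

lemma setIntegral_mul_comp_eq_setIntegral_abs_sub (hm : m ≤ mΩ)
    (hindep : Indep m (MeasurableSpace.comap (fun ω (t : ℝ) => X t ω) MeasurableSpace.pi) P)
    (hX : ∀ t, Measurable (X t))
    (hXstat : ∀ u v : ℝ, 0 ≤ u → u ≤ v →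
      P.map (fun ω => (X u ω, X v ω)) = P.map (fun ω => (X 0 ω, X (v - u) ω)))
    (hf : Measurable f) {E : Set Ω} (hE : MeasurableSet[m] E) {u v : ℝ} (hu : 0 ≤ u)
    (hv : 0 ≤ v) :
    ∫ ω in E, f (X u ω) * f (X v ω) ∂P
      = ∫ _ in E, (∫ ω', f (X 0 ω') * f (X |u - v| ω') ∂P) ∂P := by
  have hφ : Measurable fun x : ℝ → S => f (x u) * f (x v) :=
    (hf.comp (measurable_pi_apply _)).mul (hf.comp (measurable_pi_apply _))
  rw [setIntegral_const, smul_eq_mul, hindep.setIntegral_eq_mul hm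
    (measurable_pi_lambda _ hX).aemeasurable hE hφ.aestronglyMeasurable,
    integral_mul_comp_eq_abs_sub hX hXstat hf hu hv]

end StationaryProcess

theorem stmt_3_general {Ω S : Type*} [MeasurableSpace Ω] [MeasurableSpace S]
    (P : Measure Ω) [IsProbabilityMeasure P]
    (X : ℝ → Ω → S) (hXmeas : Measurable fun q : ℝ × Ω => X q.1 q.2)
    (hXstat : ∀ u v : ℝ, 0 ≤ u → u ≤ v →
      P.map (fun ω => (X u ω, X v ω)) = P.map (fun ω => (X 0 ω, X (v - u) ω)))
    (f : S → ℝ) (hfmeas : Measurable f) (C : ℝ) (hfbdd : ∀ x, |f x| ≤ C)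
    (B : Ω → ℝ) (hBmeas : Measurable B) (hBnonneg : ∀ ω, 0 ≤ B ω)
    (hB2 : Integrable (fun ω => B ω ^ 2) P)
    (hindep : Indep (MeasurableSpace.comap B inferInstance)
      (MeasurableSpace.comap (fun ω (t : ℝ) => X t ω) MeasurableSpace.pi) P) :
    (1 / 2 : ℝ) * ∫ ω, (∫ s in (0 : ℝ)..(B ω), f (X s ω)) ^ 2 ∂P
      = ∫ ω, (∫ v in (0 : ℝ)..(B ω), (B ω - v) * ∫ ω', f (X 0 ω') * f (X v ω') ∂P) ∂P := by
  have hX : ∀ t, Measurable (X t) := fun t => hXmeas.comp (measurable_const.prodMk measurable_id)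
  have hff : ∀ x y, |f x * f y| ≤ C ^ 2 := fun x y => by
    rw [abs_mul, sq]
    exact mul_le_mul (hfbdd x) (hfbdd y) (abs_nonneg _) ((abs_nonneg _).trans (hfbdd x))
  set c : ℝ → ℝ := fun v => ∫ ω', f (X 0 ω') * f (X v ω') ∂P
  have hc : Measurable c :=
    ((hfmeas.comp ((hX 0).comp measurable_snd)).mul
      (hfmeas.comp hXmeas)).stronglyMeasurable.integral_prod_right'.measurable
  have hcC : ∀ v, |c v| ≤ C ^ 2 := fun v => by
    simpa using norm_integral_le_of_norm_le_const (μ := P)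
      (f := fun ω => f (X 0 ω) * f (X v ω)) (.of_forall fun ω => hff (X 0 ω) (X v ω))
  have hH₁ : Measurable (uncurry fun ω (p : ℝ × ℝ) => f (X p.1 ω) * f (X p.2 ω)) :=
    (hfmeas.comp (hXmeas.comp (measurable_snd.fst.prodMk measurable_fst))).mul
      (hfmeas.comp (hXmeas.comp (measurable_snd.snd.prodMk measurable_fst)))
  have hH₂ : Measurable (uncurry fun (_ : Ω) (p : ℝ × ℝ) => c |p.1 - p.2|) :=
    hc.comp (measurable_snd.fst.sub measurable_snd.snd).abs
  have hdiag := integral_setIntegral_Ioc_prod_congr hBmeas hBnonneg hB2 hH₁ hH₂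
    (fun _ _ => hff _ _) (fun _ _ => hcC _) fun p hp₁ hp₂ =>
      setIntegral_mul_comp_eq_setIntegral_abs_sub hBmeas.comap_le hindep hX hXstat hfmeas
        ⟨{b | p ∈ Ioc 0 b ×ˢ Ioc 0 b}, by measurability, rfl⟩ hp₁.le hp₂.le
  simp only [sq_intervalIntegral_eq_setIntegral_Ioc_prod _ (hBnonneg _), hdiag,
    setIntegral_Ioc_prod_abs_sub hc hcC (hBnonneg _), integral_const_mul]
  ring

/-- Let `f : S → ℝ` be bounded measurable and let `B` be a nonnegative random variable with
`E[B^2] < ∞`, independent of the process `X`. Then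
`(1/2) E[(∫_0^B f(X(s)) ds)^2] = E[∫_0^B (B − v) c_f(v) dv]`,
where `c_f(v) = E[f(X(0)) f(X(v))]`. -/
theorem stmt_3 {Ω S : Type*} [MeasurableSpace Ω] [MeasurableSpace S]
    (P : Measure Ω) [IsProbabilityMeasure P]
    (ν : Measure S) [IsProbabilityMeasure ν]
    (X : ℝ → Ω → S) (hXmeas : Measurable fun q : ℝ × Ω => X q.1 q.2)
    (hXlaw : ∀ t : ℝ, 0 ≤ t → P.map (X t) = ν)
    (hXstat : ∀ u v : ℝ, 0 ≤ u → u ≤ v →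
      P.map (fun ω => (X u ω, X v ω)) = P.map (fun ω => (X 0 ω, X (v - u) ω)))
    (f : S → ℝ) (hfmeas : Measurable f) (C : ℝ) (hfbdd : ∀ x, |f x| ≤ C)
    (B : Ω → ℝ) (hBmeas : Measurable B) (hBnonneg : ∀ ω, 0 ≤ B ω)
    (hB2 : Integrable (fun ω => B ω ^ 2) P)
    (hindep : Indep (MeasurableSpace.comap B inferInstance)
      (MeasurableSpace.comap (fun ω (t : ℝ) => X t ω) MeasurableSpace.pi) P) :
    (1 / 2 : ℝ) * ∫ ω, (∫ s in (0 : ℝ)..(B ω), f (X s ω)) ^ 2 ∂P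
      = ∫ ω, (∫ v in (0 : ℝ)..(B ω), (B ω - v) * ∫ ω', f (X 0 ω') * f (X v ω') ∂P) ∂P :=
  stmt_3_general P X hXmeas hXstat f hfmeas C hfbdd B hBmeas hBnonneg hB2 hindep
end

section
/- Let p : S → [0,∞) be bounded measurable and let B be a nonnegative random variable with E[B^2] < ∞, independent of the process X. Then, as ε → 0+, E[1 − exp(−ε ∫_0^B p(X(s)) ds)] = ε E[B] · ∫_S p dν − ε^2 E[∫_0^B (B − v) c_p(v) dv] + o(ε^2), where c_p(v) = E[p(X(0)) p(X(v))]. -/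
/-!
Write `Y = ∫₀^B p(X s) ds`, so that `0 ≤ Y ≤ C B` and `Y ∈ L²`. The bound
`|e^{-x} - (1 - x + x²/2)| ≤ x² min(x, 1)` and dominated convergence give
`E[1 - e^{-εY}] = ε E[Y] - ε²/2 E[Y²] + o(ε²)`, so it remains to compute two moments.

Independence of `B` and the path can only be used at finitely many fixed times (evaluation of
a path at a variable time is not measurable for the product σ-algebra), so both moments are
computed by Fubini over `Ω × time`. At a fixed time `s`, independence and the one-point law give
`E[1{s < B} p(X s)] = P(s < B) ∫ p dν`, whence `E[Y] = E[B] ∫ p dν`. For the second moment,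
`Y² = 2 ∫_{0<u<w<B} p(X u) p(X w)`, and at fixed `u < w` independence and two-point stationarity
give `E[1{w < B} p(X u) p(X w)] = P(w < B) c_p(w - u)`. The same Fubini computation applied to
`∫_{0<u<w<B} c_p(w - u) = ∫₀^B (B - v) c_p(v) dv` gives the same values, so
`E[Y²] = 2 E[∫₀^B (B - v) c_p(v) dv]`.
-/

open MeasureTheory ProbabilityTheory Filter Topology Asymptotics Set

lemma abs_exp_neg_sub_taylor_le {x : ℝ} (hx : 0 ≤ x) :
    |Real.exp (-x) - (1 - x + x ^ 2 / 2)| ≤ x ^ 2 * min x 1 := by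
  rcases le_or_gt x 1 with h1 | h1
  · have hb := Real.exp_bound (x := -x) (by rwa [abs_neg, abs_of_nonneg hx]) (n := 3) (by norm_num)
    have hs : ∑ i ∈ Finset.range 3, (-x) ^ i / (Nat.factorial i) = 1 - x + x ^ 2 / 2 := by
      simp [Finset.sum_range_succ, Nat.factorial]
      ring
    rw [hs, abs_neg, abs_of_nonneg hx] at hb
    rw [min_eq_left h1]
    refine hb.trans ?_
    norm_num [Nat.factorial]
    nlinarith [pow_nonneg hx 3]
  · rw [min_eq_right h1.le, abs_le]
    have := Real.exp_pos (-x)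
    have := Real.exp_le_one_iff.2 (neg_nonpos.2 hx)
    constructor <;> nlinarith

section Laplace

variable {Ω : Type*} [MeasurableSpace Ω] {P : Measure Ω} {Y : Ω → ℝ}

lemma tendsto_integral_sq_mul_min (hY0 : ∀ᵐ ω ∂P, 0 ≤ Y ω) (hYm : AEStronglyMeasurable Y P)
    (hY2 : Integrable (fun ω => Y ω ^ 2) P) :
    Tendsto (fun ε => ∫ ω, Y ω ^ 2 * min (ε * Y ω) 1 ∂P) (𝓝[>] 0) (𝓝 0) := by
  have hlim := tendsto_integral_filter_of_dominated_convergence (μ := P) (l := 𝓝[>] (0 : ℝ))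
    (F := fun ε ω => Y ω ^ 2 * min (ε * Y ω) 1) (f := fun _ => 0) (fun ω => Y ω ^ 2)
    (Eventually.of_forall fun ε => by fun_prop) ?_ hY2 ?_
  · simpa using hlim
  · filter_upwards [self_mem_nhdsWithin] with ε (hε : 0 < ε)
    filter_upwards [hY0] with ω hω
    have h0 : 0 ≤ min (ε * Y ω) 1 := le_min (by positivity) zero_le_one
    rw [Real.norm_eq_abs, abs_of_nonneg (by positivity)]
    exact mul_le_of_le_one_right (sq_nonneg _) (min_le_right _ _)
  · refine ae_of_all _ fun ω => tendsto_nhdsWithin_of_tendsto_nhds ?_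
    have : Continuous fun ε : ℝ => Y ω ^ 2 * min (ε * Y ω) 1 := by fun_prop
    simpa using this.tendsto 0

theorem isLittleO_integral_one_sub_exp_neg [IsFiniteMeasure P] (hY0 : ∀ᵐ ω ∂P, 0 ≤ Y ω)
    (hY : MemLp Y 2 P) :
    (fun ε : ℝ => ∫ ω, (1 - Real.exp (-ε * Y ω)) ∂P
        - (ε * ∫ ω, Y ω ∂P - ε ^ 2 / 2 * ∫ ω, Y ω ^ 2 ∂P))
      =o[𝓝[>] 0] fun ε => ε ^ 2 := by
  have hY1 : Integrable Y P := hY.integrable one_le_two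
  have hY2 : Integrable (fun ω => Y ω ^ 2) P := hY.integrable_sq
  have hYm : AEStronglyMeasurable Y P := hY.1
  refine isLittleO_iff.2 fun c hc => ?_
  filter_upwards [(tendsto_integral_sq_mul_min hY0 hYm hY2).eventually_le_const hc,
    self_mem_nhdsWithin] with ε hJ (hε : 0 < ε)
  have hexp : Integrable (fun ω => 1 - Real.exp (-ε * Y ω)) P := by
    refine (integrable_const 1).mono' (by fun_prop) ?_
    filter_upwards [hY0] with ω hω
    rw [Real.norm_eq_abs, abs_le]
    have := Real.exp_pos (-ε * Y ω)
    have := Real.exp_le_one_iff.2 (by nlinarith : -ε * Y ω ≤ 0)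
    constructor <;> linarith
  have hpoly : Integrable (fun ω => ε * Y ω - ε ^ 2 / 2 * Y ω ^ 2) P :=
    (hY1.const_mul ε).sub (hY2.const_mul _)
  have hbound : Integrable (fun ω => ε ^ 2 * (Y ω ^ 2 * min (ε * Y ω) 1)) P := by
    refine (hY2.const_mul (ε ^ 2)).mono' (by fun_prop) ?_
    filter_upwards [hY0] with ω hω
    have h0 : 0 ≤ min (ε * Y ω) 1 := le_min (by positivity) zero_le_one
    rw [Real.norm_eq_abs, abs_of_nonneg (by positivity)]
    have := min_le_right (ε * Y ω) 1
    gcongr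
    nlinarith [sq_nonneg (Y ω)]
  calc ‖∫ ω, (1 - Real.exp (-ε * Y ω)) ∂P - (ε * ∫ ω, Y ω ∂P - ε ^ 2 / 2 * ∫ ω, Y ω ^ 2 ∂P)‖
      = ‖∫ ω, -(Real.exp (-(ε * Y ω)) - (1 - ε * Y ω + (ε * Y ω) ^ 2 / 2)) ∂P‖ := by
        rw [← integral_const_mul, ← integral_const_mul,
          ← integral_sub (hY1.const_mul ε) (hY2.const_mul _),
          ← integral_sub hexp hpoly]
        congr 2 with ω
        rw [neg_mul]
        ring
    _ ≤ ∫ ω, ε ^ 2 * (Y ω ^ 2 * min (ε * Y ω) 1) ∂P := by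
        refine norm_integral_le_of_norm_le hbound ?_
        filter_upwards [hY0] with ω hω
        rw [norm_neg, Real.norm_eq_abs]
        convert abs_exp_neg_sub_taylor_le (mul_nonneg hε.le hω) using 1
        ring
    _ ≤ c * ‖ε ^ 2‖ := by
        rw [integral_const_mul, Real.norm_eq_abs, abs_of_nonneg (sq_nonneg ε), mul_comm c]
        gcongr

end Laplace

lemma intervalIntegral_eq_integral_indicator_Ioo {a b : ℝ} (hab : a ≤ b) (f : ℝ → ℝ) :
    ∫ s in a..b, f s = ∫ s, (Ioo a b).indicator f s := by
  rw [intervalIntegral.integral_of_le hab, integral_Ioc_eq_integral_Ioo,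
    integral_indicator measurableSet_Ioo]

lemma integrableOn_Ioo_of_abs_le {f : ℝ → ℝ} (hf : Measurable f) {M : ℝ}
    (hM : ∀ s, |f s| ≤ M) (b : ℝ) : IntegrableOn f (Ioo 0 b) :=
  Measure.integrableOn_of_bounded (by simp [Real.volume_Ioo]) hf.aestronglyMeasurable
    (ae_of_all _ fun s => (Real.norm_eq_abs _).trans_le (hM s))

lemma measurableSet_setOf_mem_Ioo : MeasurableSet {q : ℝ × ℝ | q.2 ∈ Ioo 0 q.1} :=
  (measurableSet_lt measurable_const measurable_snd).inter
    (measurableSet_lt measurable_snd measurable_fst)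

lemma integral_eq_two_mul_setIntegral_lt {μ : Measure ℝ} [SFinite μ] [NullSingletonClass μ]
    {G : ℝ × ℝ → ℝ} (hG : Integrable G (μ.prod μ)) (hsymm : ∀ z, G z.swap = G z) :
    ∫ z, G z ∂μ.prod μ = 2 * ∫ z in {z | z.1 < z.2}, G z ∂μ.prod μ := by
  have hlt : MeasurableSet {z : ℝ × ℝ | z.1 < z.2} :=
    measurableSet_lt measurable_fst measurable_snd
  have hdiag : μ.prod μ {z : ℝ × ℝ | z.1 = z.2} = 0 := by
    rw [Measure.prod_apply (measurableSet_eq_fun measurable_fst measurable_snd)]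
    simp [preimage]
  have hcompl : {z : ℝ × ℝ | z.1 < z.2}ᶜ =ᵐ[μ.prod μ] {z | z.2 < z.1} := by
    refine (ae_eq_set).2 ⟨measure_mono_null (fun z hz => ?_) hdiag,
      measure_mono_null (fun z hz => ?_) measure_empty⟩
    · exact le_antisymm (not_lt.1 hz.2) (not_lt.1 hz.1)
    · exact hz.2 fun h => lt_asymm h hz.1
  calc ∫ z, G z ∂μ.prod μ
      = (∫ z in {z | z.1 < z.2}, G z ∂μ.prod μ) + ∫ z in {z | z.2 < z.1}, G z ∂μ.prod μ := by
        rw [← integral_add_compl hlt hG]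
        exact congrArg _ (setIntegral_congr_set hcompl)
    _ = (∫ z in {z | z.1 < z.2}, G z ∂μ.prod μ)
          + ∫ z in Prod.swap ⁻¹' {z | z.1 < z.2}, G z.swap ∂μ.prod μ := by
        congr 1
        exact setIntegral_congr_fun (measurableSet_lt measurable_snd measurable_fst)
          fun z _ => (hsymm z).symm
    _ = 2 * ∫ z in {z | z.1 < z.2}, G z ∂μ.prod μ := by
        rw [Measure.measurePreserving_swap.setIntegral_preimage_emb
          MeasurableEquiv.prodComm.measurableEmbedding, two_mul]

def triangle (b : ℝ) : Set (ℝ × ℝ) := {z | 0 < z.1 ∧ z.1 < z.2 ∧ z.2 < b}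

lemma measurableSet_setOf_mem_triangle :
    MeasurableSet {q : ℝ × (ℝ × ℝ) | q.2 ∈ triangle q.1} := by
  have h1 : Measurable fun q : ℝ × (ℝ × ℝ) => q.2.1 := measurable_fst.comp measurable_snd
  have h2 : Measurable fun q : ℝ × (ℝ × ℝ) => q.2.2 := measurable_snd.comp measurable_snd
  exact (measurableSet_lt measurable_const h1).inter
    ((measurableSet_lt h1 h2).inter (measurableSet_lt h2 measurable_fst))

lemma indicator_triangle_mul_eq_indicator_lt (b : ℝ) (f g : ℝ → ℝ) (z : ℝ × ℝ) :
    (triangle b).indicator (fun z => f z.1 * g z.2) z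
      = {z : ℝ × ℝ | z.1 < z.2}.indicator
          (fun z => (Ioo 0 b).indicator f z.1 * (Ioo 0 b).indicator g z.2) z := by
  by_cases hz : z ∈ triangle b
  · obtain ⟨h0, h12, hb⟩ := hz
    rw [indicator_of_mem (show z ∈ triangle b from ⟨h0, h12, hb⟩),
      indicator_of_mem (show z ∈ {z : ℝ × ℝ | z.1 < z.2} from h12),
      indicator_of_mem (show z.1 ∈ Ioo 0 b from ⟨h0, h12.trans hb⟩),
      indicator_of_mem (show z.2 ∈ Ioo 0 b from ⟨h0.trans h12, hb⟩)]
  · rw [indicator_of_notMem hz, eq_comm, indicator_apply_eq_zero]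
    intro h12
    by_cases h1 : z.1 ∈ Ioo 0 b
    · have h2 : z.2 ∉ Ioo 0 b := fun h2 => hz ⟨h1.1, h12, h2.2⟩
      rw [indicator_of_notMem h2, mul_zero]
    · rw [indicator_of_notMem h1, zero_mul]

lemma sq_intervalIntegral_eq_two_mul_integral_triangle {b : ℝ} (hb : 0 ≤ b) {f : ℝ → ℝ}
    (hf : IntegrableOn f (Ioo 0 b)) :
    (∫ s in 0..b, f s) ^ 2
      = 2 * ∫ z : ℝ × ℝ, (triangle b).indicator (fun z => f z.1 * f z.2) z := by
  have hg : Integrable ((Ioo 0 b).indicator f) :=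
    (integrable_indicator_iff measurableSet_Ioo).2 hf
  rw [intervalIntegral_eq_integral_indicator_Ioo hb, sq, ← integral_prod_mul,
    integral_eq_two_mul_setIntegral_lt (hg.mul_prod hg) fun z => mul_comm _ _,
    ← integral_indicator (measurableSet_lt measurable_fst measurable_snd),
    Measure.volume_eq_prod]
  simp_rw [indicator_triangle_mul_eq_indicator_lt]

lemma measurePreserving_snd_sub_fst_snd :
    MeasurePreserving (fun z : ℝ × ℝ => (z.2 - z.1, z.2)) volume volume := by
  have hσ : (fun z : ℝ × ℝ => (z.2 - z.1, z.2))
      = (fun z => (z.1 + z.2, z.2)) ∘ Prod.map Neg.neg id := by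
    ext z <;> simp [neg_add_eq_sub]
  rw [hσ]
  exact (measurePreserving_add_prod volume volume).comp
    ((Measure.measurePreserving_neg volume).prod (MeasurePreserving.id volume))

lemma integral_indicator_triangle_comp_fst {b : ℝ} (hb : 0 ≤ b) {c : ℝ → ℝ}
    (hc : IntegrableOn c (Ioo 0 b)) :
    ∫ z : ℝ × ℝ, (triangle b).indicator (fun z => c z.1) z = ∫ v in 0..b, (b - v) * c v := by
  have hF : Integrable ((triangle b).indicator fun z => c z.1) (volume.prod volume) := by
    have hg : Integrable ((Ioo 0 b).indicator c) :=
      (integrable_indicator_iff measurableSet_Ioo).2 hc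
    have hh : Integrable ((Ioo 0 b).indicator (1 : ℝ → ℝ)) :=
      (integrable_indicator_iff measurableSet_Ioo).2 (integrableOn_const (by simp))
    refine ((hg.mul_prod hh).indicator (measurableSet_lt measurable_fst measurable_snd)).congr
      (ae_of_all _ fun z => ?_)
    simpa using (indicator_triangle_mul_eq_indicator_lt b c 1 z).symm
  have hinner : ∀ u, ∫ w, (triangle b).indicator (fun z => c z.1) (u, w)
      = (Ioo 0 b).indicator (fun v => (b - v) * c v) u := by
    intro u
    by_cases hu : u ∈ Ioo 0 b
    · have : (fun w => (triangle b).indicator (fun z => c z.1) (u, w))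
          = (Ioo u b).indicator fun _ => c u := by
        ext w
        by_cases hw : w ∈ Ioo u b
        · rw [indicator_of_mem hw, indicator_of_mem (show (u, w) ∈ triangle b from ⟨hu.1, hw⟩)]
        · rw [indicator_of_notMem hw, indicator_of_notMem fun h => hw h.2]
      rw [this, integral_indicator_const _ measurableSet_Ioo, indicator_of_mem hu, smul_eq_mul,
        Real.volume_real_Ioo_of_le hu.2.le]
    · rw [indicator_of_notMem hu]
      refine integral_eq_zero_of_ae (ae_of_all _ fun w => indicator_of_notMem ?_ _)
      exact fun h => hu ⟨h.1, h.2.1.trans h.2.2⟩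
  rw [Measure.volume_eq_prod, integral_prod _ hF, intervalIntegral_eq_integral_indicator_Ioo hb]
  exact integral_congr_ae (ae_of_all _ hinner)

lemma intervalIntegral_sub_mul_eq_integral_triangle {b : ℝ} (hb : 0 ≤ b) {c : ℝ → ℝ}
    (hc : IntegrableOn c (Ioo 0 b)) :
    ∫ v in 0..b, (b - v) * c v
      = ∫ z : ℝ × ℝ, (triangle b).indicator (fun z => c (z.2 - z.1)) z := by
  let σ : ℝ × ℝ ≃ᵐ ℝ × ℝ := MeasurableEquiv.ofInvolutive (fun z => (z.2 - z.1, z.2))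
    (fun z => by simp) (by fun_prop)
  have hσ : ∀ z, (triangle b).indicator (fun z => c (z.2 - z.1)) z
      = (triangle b).indicator (fun z => c z.1) (σ z) := by
    intro z
    have hmem : σ z ∈ triangle b ↔ z ∈ triangle b := by
      show (0 < z.2 - z.1 ∧ z.2 - z.1 < z.2 ∧ z.2 < b) ↔ (0 < z.1 ∧ z.1 < z.2 ∧ z.2 < b)
      constructor <;> rintro ⟨h1, h2, h3⟩ <;> refine ⟨?_, ?_, ?_⟩ <;> linarith
    by_cases hz : z ∈ triangle b
    · rw [indicator_of_mem hz, indicator_of_mem (hmem.2 hz)]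
      rfl
    · rw [indicator_of_notMem hz, indicator_of_notMem (mt hmem.1 hz)]
  rw [integral_congr_ae (ae_of_all _ hσ),
    measurePreserving_snd_sub_fst_snd.integral_comp' (f := σ),
    integral_indicator_triangle_comp_fst hb hc]

lemma integral_integral_eq_of_forall_integral_eq {α β : Type*} [MeasurableSpace α]
    [MeasurableSpace β] {μ : Measure α} {ν : Measure β} [SFinite μ] [SFinite ν]
    {F G : α × β → ℝ} (hF : Integrable F (μ.prod ν)) (hG : Integrable G (μ.prod ν))
    (h : ∀ y, ∫ x, F (x, y) ∂μ = ∫ x, G (x, y) ∂μ) :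
    ∫ x, ∫ y, F (x, y) ∂ν ∂μ = ∫ x, ∫ y, G (x, y) ∂ν ∂μ := by
  rw [integral_integral_swap (f := fun x y => F (x, y)) hF,
    integral_integral_swap (f := fun x y => G (x, y)) hG]
  exact integral_congr_ae (ae_of_all _ h)

lemma abs_mul_le_sq_of_abs_le {a b C : ℝ} (ha : |a| ≤ C) (hb : |b| ≤ C) : |a * b| ≤ C ^ 2 := by
  rw [abs_mul, sq]
  exact mul_le_mul ha hb (abs_nonneg _) ((abs_nonneg _).trans ha)

section OccupationIntegral

variable {Ω S : Type*} [MeasurableSpace Ω] {P : Measure Ω}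

lemma integral_indicator_comp_of_indepFun {α E : Type*} [MeasurableSpace α] [MeasurableSpace E]
    {B : Ω → ℝ} {Z : Ω → E} (hBZ : IndepFun B Z P) (hB : Measurable B) (hZ : Measurable Z)
    {T : ℝ → Set α} (hT : MeasurableSet {q : ℝ × α | q.2 ∈ T q.1}) {h : α → E → ℝ}
    (hh : ∀ a, Measurable (h a)) (a : α) :
    ∫ ω, (T (B ω)).indicator (fun a => h a (Z ω)) a ∂P
      = P.real {ω | a ∈ T (B ω)} * ∫ ω, h a (Z ω) ∂P := by
  have hTa : MeasurableSet {b | a ∈ T b} := hT.preimage (measurable_id.prodMk measurable_const)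
  have hsplit : ∀ ω, (T (B ω)).indicator (fun a => h a (Z ω)) a
      = {b | a ∈ T b}.indicator 1 (B ω) * h a (Z ω) := by
    intro ω
    by_cases ha : a ∈ T (B ω)
    · rw [indicator_of_mem ha, indicator_of_mem (show B ω ∈ {b | a ∈ T b} from ha),
        Pi.one_apply, one_mul]
    · rw [indicator_of_notMem ha, indicator_of_notMem (show B ω ∉ {b | a ∈ T b} from ha),
        zero_mul]
  calc ∫ ω, (T (B ω)).indicator (fun a => h a (Z ω)) a ∂P
      = ∫ ω, {b | a ∈ T b}.indicator 1 (B ω) * h a (Z ω) ∂P :=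
        integral_congr_ae (ae_of_all _ hsplit)
    _ = (∫ ω, {b | a ∈ T b}.indicator 1 (B ω) ∂P) * ∫ ω, h a (Z ω) ∂P :=
        (hBZ.comp (measurable_one.indicator hTa) (hh a)).integral_fun_mul_eq_mul_integral
          ((measurable_one.indicator hTa).comp hB).aestronglyMeasurable
          ((hh a).comp hZ).aestronglyMeasurable
    _ = P.real {ω | a ∈ T (B ω)} * ∫ ω, h a (Z ω) ∂P :=
        congrArg (· * _) (integral_indicator_one (hB hTa))

lemma prod_setOf_mem_Ioo_ne_top [SFinite P] {B : Ω → ℝ} (hB : Measurable B)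
    (hBi : Integrable B P) : P.prod volume {q : Ω × ℝ | q.2 ∈ Ioo 0 (B q.1)} ≠ ⊤ := by
  have hA : MeasurableSet {q : Ω × ℝ | q.2 ∈ Ioo 0 (B q.1)} :=
    measurableSet_setOf_mem_Ioo.preimage ((hB.comp measurable_fst).prodMk measurable_snd)
  rw [Measure.prod_apply hA]
  refine (lt_of_le_of_lt ?_ hBi.2).ne
  refine (lintegral_mono fun ω => ?_).trans (lintegral_ofReal_le_lintegral_enorm B)
  show volume (Ioo 0 (B ω)) ≤ _
  rw [Real.volume_Ioo, sub_zero]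

lemma prod_setOf_mem_triangle_ne_top [SFinite P] {B : Ω → ℝ} (hB : Measurable B)
    (hB0 : ∀ ω, 0 ≤ B ω) (hB2 : Integrable (fun ω => B ω ^ 2) P) :
    P.prod volume {q : Ω × (ℝ × ℝ) | q.2 ∈ triangle (B q.1)} ≠ ⊤ := by
  have hA : MeasurableSet {q : Ω × (ℝ × ℝ) | q.2 ∈ triangle (B q.1)} :=
    measurableSet_setOf_mem_triangle.preimage ((hB.comp measurable_fst).prodMk measurable_snd)
  rw [Measure.prod_apply hA]
  refine (lt_of_le_of_lt ?_ hB2.2).ne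
  refine (lintegral_mono fun ω => ?_).trans (lintegral_ofReal_le_lintegral_enorm _)
  calc volume (triangle (B ω)) ≤ volume (Ioo 0 (B ω) ×ˢ Ioo 0 (B ω)) :=
        measure_mono fun z hz => ⟨⟨hz.1, hz.2.1.trans hz.2.2⟩, ⟨hz.1.trans hz.2.1, hz.2.2⟩⟩
    _ = ENNReal.ofReal (B ω ^ 2) := by
        rw [Measure.volume_eq_prod, Measure.prod_prod, Real.volume_Ioo, sub_zero,
          ← ENNReal.ofReal_mul (hB0 ω), sq]

noncomputable def pairCorrelation (P : Measure Ω) (X : ℝ → Ω → S) (p : S → ℝ) (v : ℝ) : ℝ :=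
  ∫ ω, p (X 0 ω) * p (X v ω) ∂P

variable {X : ℝ → Ω → S} {p : S → ℝ} {B : Ω → ℝ} {C : ℝ}

lemma abs_pairCorrelation_le [IsProbabilityMeasure P] (hpC : ∀ x, |p x| ≤ C) (v : ℝ) :
    |pairCorrelation P X p v| ≤ C ^ 2 := by
  simpa [pairCorrelation] using norm_integral_le_of_norm_le_const (μ := P) (ae_of_all _ fun ω =>
    (Real.norm_eq_abs _).trans_le (abs_mul_le_sq_of_abs_le (hpC (X 0 ω)) (hpC (X v ω))))

variable [MeasurableSpace S]

lemma measurable_pairCorrelation [SFinite P] (hX : Measurable fun q : ℝ × Ω => X q.1 q.2)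
    (hp : Measurable p) : Measurable (pairCorrelation P X p) :=
  ((hp.comp (hX.of_uncurry_left.comp measurable_snd)).mul (hp.comp hX)).stronglyMeasurable
    |>.integral_prod_right' (ν := P) |>.measurable

lemma memLp_two_intervalIntegral_comp (hX : Measurable fun q : ℝ × Ω => X q.1 q.2)
    (hp : Measurable p) (hpC : ∀ x, |p x| ≤ C) (hB : Measurable B) (hB0 : ∀ ω, 0 ≤ B ω)
    (hB2 : MemLp B 2 P) : MemLp (fun ω => ∫ s in 0..B ω, p (X s ω)) 2 P := by
  have hF : Measurable fun q : Ω × ℝ => (Ioo 0 (B q.1)).indicator (fun s => p (X s q.1)) q.2 :=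
    (hp.comp (hX.comp measurable_swap)).indicator (measurableSet_setOf_mem_Ioo.preimage
      ((hB.comp measurable_fst).prodMk measurable_snd))
  have hY : (fun ω => ∫ s in 0..B ω, p (X s ω))
      = fun ω => ∫ s, (Ioo 0 (B ω)).indicator (fun s => p (X s ω)) s :=
    funext fun ω => intervalIntegral_eq_integral_indicator_Ioo (hB0 ω) _
  refine (hB2.const_mul C).of_le ?_ (ae_of_all _ fun ω => ?_)
  · rw [hY]
    exact hF.stronglyMeasurable.integral_prod_right'.aestronglyMeasurable
  · refine (intervalIntegral.norm_integral_le_of_norm_le_const fun s _ => hpC _).trans ?_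
    rw [sub_zero, Real.norm_eq_abs, abs_mul, abs_of_nonneg (hB0 ω)]
    exact mul_le_mul_of_nonneg_right (le_abs_self C) (hB0 ω)

lemma integral_indicator_Ioo_comp_eq [IsProbabilityMeasure P]
    (hX : Measurable fun q : ℝ × Ω => X q.1 q.2) {ν : Measure S}
    (hXlaw : ∀ t, 0 ≤ t → P.map (X t) = ν) (hp : Measurable p) (hB : Measurable B)
    (hindep : IndepFun B (fun ω t => X t ω) P) (s : ℝ) :
    ∫ ω, (Ioo 0 (B ω)).indicator (fun s => p (X s ω)) s ∂P
      = ∫ ω, (Ioo 0 (B ω)).indicator (fun _ => ∫ x, p x ∂ν) s ∂P := by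
  have hZ : Measurable fun ω t => X t ω := measurable_pi_lambda _ fun _ => hX.of_uncurry_left
  rw [integral_indicator_comp_of_indepFun hindep hB hZ measurableSet_setOf_mem_Ioo
      (h := fun s φ => p (φ s)) (fun s => hp.comp (measurable_pi_apply s)) s,
    integral_indicator_comp_of_indepFun hindep hB hZ measurableSet_setOf_mem_Ioo
      (h := fun _ _ => ∫ x, p x ∂ν) (fun _ => measurable_const) s,
    integral_const, probReal_univ, one_smul]
  rcases le_or_gt s 0 with hs | hs
  · have : {ω | s ∈ Ioo 0 (B ω)} = ∅ :=
      eq_empty_of_forall_notMem fun ω h => (h.1.trans_le hs).false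
    rw [this, measureReal_empty, zero_mul, zero_mul]
  · congr 1
    change ∫ ω, p (X s ω) ∂P = ∫ x, p x ∂ν
    rw [← hXlaw s hs.le, integral_map hX.of_uncurry_left.aemeasurable hp.aestronglyMeasurable]

lemma integral_indicator_triangle_comp_eq [IsProbabilityMeasure P]
    (hX : Measurable fun q : ℝ × Ω => X q.1 q.2)
    (hXstat : ∀ u v : ℝ, 0 ≤ u → u ≤ v →
      P.map (fun ω => (X u ω, X v ω)) = P.map (fun ω => (X 0 ω, X (v - u) ω)))
    (hp : Measurable p) (hB : Measurable B) (hindep : IndepFun B (fun ω t => X t ω) P)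
    (z : ℝ × ℝ) :
    ∫ ω, (triangle (B ω)).indicator (fun z => p (X z.1 ω) * p (X z.2 ω)) z ∂P
      = ∫ ω, (triangle (B ω)).indicator (fun z => pairCorrelation P X p (z.2 - z.1)) z ∂P := by
  have hXt : ∀ t, Measurable (X t) := fun _ => hX.of_uncurry_left
  have hZ : Measurable fun ω t => X t ω := measurable_pi_lambda _ hXt
  rw [integral_indicator_comp_of_indepFun hindep hB hZ measurableSet_setOf_mem_triangle
      (h := fun z φ => p (φ z.1) * p (φ z.2))
      (fun z => (hp.comp (measurable_pi_apply z.1)).mul (hp.comp (measurable_pi_apply z.2))) z,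
    integral_indicator_comp_of_indepFun hindep hB hZ measurableSet_setOf_mem_triangle
      (h := fun z _ => pairCorrelation P X p (z.2 - z.1)) (fun _ => measurable_const) z,
    integral_const, probReal_univ, one_smul]
  by_cases hz : 0 < z.1 ∧ z.1 < z.2
  · congr 1
    have hident : IdentDistrib (fun ω => (X z.1 ω, X z.2 ω))
        (fun ω => (X 0 ω, X (z.2 - z.1) ω)) P P :=
      ⟨((hXt _).prodMk (hXt _)).aemeasurable, ((hXt _).prodMk (hXt _)).aemeasurable,
        hXstat z.1 z.2 hz.1.le hz.2.le⟩
    exact (hident.comp ((hp.comp measurable_fst).mul (hp.comp measurable_snd))).integral_eq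
  · have : {ω | z ∈ triangle (B ω)} = ∅ :=
      eq_empty_of_forall_notMem fun ω h => hz ⟨h.1, h.2.1⟩
    rw [this, measureReal_empty, zero_mul, zero_mul]

theorem integral_intervalIntegral_comp_eq_mul [IsProbabilityMeasure P]
    (hX : Measurable fun q : ℝ × Ω => X q.1 q.2) {ν : Measure S}
    (hXlaw : ∀ t, 0 ≤ t → P.map (X t) = ν) (hp : Measurable p) (hpC : ∀ x, |p x| ≤ C)
    (hB : Measurable B) (hB0 : ∀ ω, 0 ≤ B ω) (hBi : Integrable B P)
    (hindep : IndepFun B (fun ω t => X t ω) P) :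
    ∫ ω, (∫ s in 0..B ω, p (X s ω)) ∂P = (∫ ω, B ω ∂P) * ∫ x, p x ∂ν := by
  set m := ∫ x, p x ∂ν
  have hA : MeasurableSet {q : Ω × ℝ | q.2 ∈ Ioo 0 (B q.1)} :=
    measurableSet_setOf_mem_Ioo.preimage ((hB.comp measurable_fst).prodMk measurable_snd)
  have hfin := prod_setOf_mem_Ioo_ne_top (P := P) hB hBi
  have hF : Integrable (fun q : Ω × ℝ => (Ioo 0 (B q.1)).indicator (fun s => p (X s q.1)) q.2)
      (P.prod volume) :=
    (integrable_indicator_iff hA).2 <| Measure.integrableOn_of_bounded hfin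
      (hp.comp (hX.comp measurable_swap)).aestronglyMeasurable
      (ae_of_all _ fun q => (Real.norm_eq_abs _).trans_le (hpC _))
  have hG : Integrable (fun q : Ω × ℝ => (Ioo 0 (B q.1)).indicator (fun _ => m) q.2)
      (P.prod volume) :=
    (integrable_indicator_iff hA).2 <| integrableOn_const hfin
  calc ∫ ω, (∫ s in 0..B ω, p (X s ω)) ∂P
      = ∫ ω, (∫ s, (Ioo 0 (B ω)).indicator (fun s => p (X s ω)) s) ∂P :=
        integral_congr_ae <| ae_of_all _ fun ω =>
          intervalIntegral_eq_integral_indicator_Ioo (hB0 ω) _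
    _ = ∫ ω, (∫ s, (Ioo 0 (B ω)).indicator (fun _ => m) s) ∂P :=
        integral_integral_eq_of_forall_integral_eq hF hG
          (integral_indicator_Ioo_comp_eq hX hXlaw hp hB hindep)
    _ = ∫ ω, B ω * m ∂P := by
        refine integral_congr_ae (ae_of_all _ fun ω => ?_)
        change ∫ s, (Ioo 0 (B ω)).indicator (fun _ => m) s = B ω * m
        rw [← intervalIntegral_eq_integral_indicator_Ioo (hB0 ω), intervalIntegral.integral_const,
          sub_zero, smul_eq_mul]
    _ = (∫ ω, B ω ∂P) * m := integral_mul_const _ _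

theorem integral_sq_intervalIntegral_comp_eq [IsProbabilityMeasure P]
    (hX : Measurable fun q : ℝ × Ω => X q.1 q.2)
    (hXstat : ∀ u v : ℝ, 0 ≤ u → u ≤ v →
      P.map (fun ω => (X u ω, X v ω)) = P.map (fun ω => (X 0 ω, X (v - u) ω)))
    (hp : Measurable p) (hpC : ∀ x, |p x| ≤ C) (hB : Measurable B) (hB0 : ∀ ω, 0 ≤ B ω)
    (hB2 : Integrable (fun ω => B ω ^ 2) P) (hindep : IndepFun B (fun ω t => X t ω) P) :
    ∫ ω, (∫ s in 0..B ω, p (X s ω)) ^ 2 ∂P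
      = 2 * ∫ ω, (∫ v in 0..B ω, (B ω - v) * pairCorrelation P X p v) ∂P := by
  set c := pairCorrelation P X p
  have hc := measurable_pairCorrelation (P := P) hX hp
  have hA : MeasurableSet {q : Ω × (ℝ × ℝ) | q.2 ∈ triangle (B q.1)} :=
    measurableSet_setOf_mem_triangle.preimage ((hB.comp measurable_fst).prodMk measurable_snd)
  have hfin := prod_setOf_mem_triangle_ne_top (P := P) hB hB0 hB2
  have hF : Integrable (fun q : Ω × (ℝ × ℝ) => (triangle (B q.1)).indicator
      (fun z => p (X z.1 q.1) * p (X z.2 q.1)) q.2) (P.prod volume) :=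
    (integrable_indicator_iff hA).2 <| Measure.integrableOn_of_bounded hfin
      ((hp.comp (hX.comp ((measurable_fst.comp measurable_snd).prodMk measurable_fst))).mul
        (hp.comp (hX.comp ((measurable_snd.comp measurable_snd).prodMk
          measurable_fst)))).aestronglyMeasurable
      (ae_of_all _ fun q => (Real.norm_eq_abs _).trans_le (abs_mul_le_sq_of_abs_le (hpC _) (hpC _)))
  have hG : Integrable (fun q : Ω × (ℝ × ℝ) => (triangle (B q.1)).indicator
      (fun z => c (z.2 - z.1)) q.2) (P.prod volume) :=
    (integrable_indicator_iff hA).2 <| Measure.integrableOn_of_bounded hfin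
      (hc.comp ((measurable_snd.comp measurable_snd).sub
        (measurable_fst.comp measurable_snd))).aestronglyMeasurable
      (ae_of_all _ fun q => (Real.norm_eq_abs _).trans_le (abs_pairCorrelation_le hpC _))
  calc ∫ ω, (∫ s in 0..B ω, p (X s ω)) ^ 2 ∂P
      = ∫ ω, 2 * (∫ z : ℝ × ℝ, (triangle (B ω)).indicator
          (fun z => p (X z.1 ω) * p (X z.2 ω)) z) ∂P :=
        integral_congr_ae <| ae_of_all _ fun ω =>
          sq_intervalIntegral_eq_two_mul_integral_triangle (hB0 ω)
            (integrableOn_Ioo_of_abs_le (hp.comp hX.of_uncurry_right) (fun _ => hpC _) _)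
    _ = 2 * ∫ ω, (∫ z : ℝ × ℝ, (triangle (B ω)).indicator (fun z => c (z.2 - z.1)) z) ∂P := by
        rw [integral_const_mul]
        exact congrArg (2 * ·) (integral_integral_eq_of_forall_integral_eq hF hG
          (integral_indicator_triangle_comp_eq hX hXstat hp hB hindep))
    _ = 2 * ∫ ω, (∫ v in 0..B ω, (B ω - v) * c v) ∂P := by
        refine congrArg (2 * ·) (integral_congr_ae (ae_of_all _ fun ω => ?_))
        exact (intervalIntegral_sub_mul_eq_integral_triangle (hB0 ω)
          (integrableOn_Ioo_of_abs_le hc (abs_pairCorrelation_le hpC) _)).symm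

end OccupationIntegral

theorem stmt_8_general {Ω S : Type*} [MeasurableSpace Ω] [MeasurableSpace S]
    (P : Measure Ω) [IsProbabilityMeasure P]
    (ν : Measure S)
    (X : ℝ → Ω → S) (hXmeas : Measurable fun q : ℝ × Ω => X q.1 q.2)
    (hXlaw : ∀ t : ℝ, 0 ≤ t → P.map (X t) = ν)
    (hXstat : ∀ u v : ℝ, 0 ≤ u → u ≤ v →
      P.map (fun ω => (X u ω, X v ω)) = P.map (fun ω => (X 0 ω, X (v - u) ω)))
    (p : S → ℝ) (hpmeas : Measurable p) (hpnonneg : ∀ x, 0 ≤ p x)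
    (C : ℝ) (hpbdd : ∀ x, p x ≤ C)
    (B : Ω → ℝ) (hBmeas : Measurable B) (hBnonneg : ∀ ω, 0 ≤ B ω)
    (hB2 : Integrable (fun ω => B ω ^ 2) P)
    (hindep : Indep (MeasurableSpace.comap B inferInstance)
      (MeasurableSpace.comap (fun ω (t : ℝ) => X t ω) MeasurableSpace.pi) P) :
    (fun ε : ℝ =>
        (∫ ω, (1 - Real.exp (-ε * ∫ s in (0 : ℝ)..(B ω), p (X s ω))) ∂P)
          - (ε * (∫ ω, B ω ∂P) * (∫ x, p x ∂ν)
              - ε ^ 2 * ∫ ω, (∫ v in (0 : ℝ)..(B ω),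
                  (B ω - v) * ∫ ω', p (X 0 ω') * p (X v ω') ∂P) ∂P))
      =o[𝓝[>] (0 : ℝ)] (fun ε : ℝ => ε ^ 2) := by
  have hIndep : IndepFun B (fun ω t => X t ω) P := hindep
  have hpC : ∀ x, |p x| ≤ C := fun x => (abs_of_nonneg (hpnonneg x)).trans_le (hpbdd x)
  have hBL2 : MemLp B 2 P := (memLp_two_iff_integrable_sq hBmeas.aestronglyMeasurable).2 hB2
  have hY0 : ∀ ω, 0 ≤ ∫ s in (0 : ℝ)..(B ω), p (X s ω) := fun ω =>
    intervalIntegral.integral_nonneg (hBnonneg ω) fun s _ => hpnonneg _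
  have hmean := integral_intervalIntegral_comp_eq_mul hXmeas hXlaw hpmeas hpC hBmeas hBnonneg
    (hBL2.integrable one_le_two) hIndep
  have hsecond := integral_sq_intervalIntegral_comp_eq hXmeas hXstat hpmeas hpC hBmeas hBnonneg
    hB2 hIndep
  refine (isLittleO_integral_one_sub_exp_neg (ae_of_all _ hY0)
    (memLp_two_intervalIntegral_comp hXmeas hpmeas hpC hBmeas hBnonneg hBL2)).congr_left
    fun ε => ?_
  rw [hmean, hsecond]
  simp only [pairCorrelation]
  ring

/-- Let `p : S → [0,∞)` be bounded measurable and let `B` be a nonnegative random variable with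
`E[B^2] < ∞`, independent of the process `X`. Then, as `ε → 0+`,
`E[1 − exp(−ε ∫_0^B p(X(s)) ds)] = ε E[B] ⬝ ∫_S p dν − ε^2 E[∫_0^B (B − v) c_p(v) dv] + o(ε^2)`,
where `c_p(v) = E[p(X(0)) p(X(v))]`. -/
theorem stmt_8 {Ω S : Type*} [MeasurableSpace Ω] [MeasurableSpace S]
    (P : Measure Ω) [IsProbabilityMeasure P]
    (ν : Measure S) [IsProbabilityMeasure ν]
    (X : ℝ → Ω → S) (hXmeas : Measurable fun q : ℝ × Ω => X q.1 q.2)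
    (hXlaw : ∀ t : ℝ, 0 ≤ t → P.map (X t) = ν)
    (hXstat : ∀ u v : ℝ, 0 ≤ u → u ≤ v →
      P.map (fun ω => (X u ω, X v ω)) = P.map (fun ω => (X 0 ω, X (v - u) ω)))
    (p : S → ℝ) (hpmeas : Measurable p) (hpnonneg : ∀ x, 0 ≤ p x)
    (C : ℝ) (hpbdd : ∀ x, p x ≤ C)
    (B : Ω → ℝ) (hBmeas : Measurable B) (hBnonneg : ∀ ω, 0 ≤ B ω)
    (hB2 : Integrable (fun ω => B ω ^ 2) P)
    (hindep : Indep (MeasurableSpace.comap B inferInstance)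
      (MeasurableSpace.comap (fun ω (t : ℝ) => X t ω) MeasurableSpace.pi) P) :
    (fun ε : ℝ =>
        (∫ ω, (1 - Real.exp (-ε * ∫ s in (0 : ℝ)..(B ω), p (X s ω))) ∂P)
          - (ε * (∫ ω, B ω ∂P) * (∫ x, p x ∂ν)
              - ε ^ 2 * ∫ ω, (∫ v in (0 : ℝ)..(B ω),
                  (B ω - v) * ∫ ω', p (X 0 ω') * p (X v ω') ∂P) ∂P))
      =o[𝓝[>] (0 : ℝ)] (fun ε : ℝ => ε ^ 2) :=
  stmt_8_general P ν X hXmeas hXlaw hXstat p hpmeas hpnonneg C hpbdd B hBmeas hBnonneg hB2 hindep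
end

section
/- Let p : S → [0,∞) be bounded measurable and let B be a nonnegative random variable with E[B^2] < ∞, independent of the process X. Then lim_{ε → 0+} E[∫_0^B p(X(u)) exp(−ε ∫_0^u p(X(s)) ds) (B − u) du] = (∫_S p dν) · E[B^2]/2. -/
/-!
For `ε ≥ 0` the damping factor `exp (-ε ∫₀ᵘ p(X s) ds)` lies in `(0, 1]`, so the inner integral is
bounded by `C B² / 2` and tends, as `ε → 0⁺`, to `G = ∫₀ᴮ p(X u) (B - u) du`; dominated convergence
in `ω` reduces the claim to `E[G] = (∫ p dν) E[B²] / 2`. For that, Tonelli writes `E[G]` as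
`∫₀^∞ E[p(X u) (B - u)⁺] du`; for each `u ≥ 0` independence and the law of `X u` factor the
expectation as `(∫ p dν) E[(B - u)⁺]`, and `∫₀^∞ (b - u)⁺ du = b² / 2`.
-/

open MeasureTheory ProbabilityTheory Filter Topology
open scoped ENNReal

section ParametricIntervalIntegral

variable {α : Type*} [MeasurableSpace α] {f : α → ℝ → ℝ} {a b : α → ℝ}

lemma stronglyMeasurable_integral_indicator_Ioc (hf : Measurable (Function.uncurry f))
    (ha : Measurable a) (hb : Measurable b) :
    StronglyMeasurable fun x => ∫ s, (Set.Ioc (a x) (b x)).indicator (f x) s := by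
  have hset : MeasurableSet {z : α × ℝ | z.2 ∈ Set.Ioc (a z.1) (b z.1)} :=
    (measurableSet_lt (ha.comp measurable_fst) measurable_snd).inter
      (measurableSet_le measurable_snd (hb.comp measurable_fst))
  exact (Measurable.ite hset hf measurable_const).stronglyMeasurable.integral_prod_right'
    (f := fun z => (Set.Ioc (a z.1) (b z.1)).indicator (f z.1) z.2) (ν := volume)

lemma stronglyMeasurable_intervalIntegral (hf : Measurable (Function.uncurry f))
    (ha : Measurable a) (hb : Measurable b) :
    StronglyMeasurable fun x => ∫ s in a x..b x, f x s := by
  simp only [intervalIntegral, ← integral_indicator measurableSet_Ioc]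
  exact (stronglyMeasurable_integral_indicator_Ioc hf ha hb).sub
    (stronglyMeasurable_integral_indicator_Ioc hf hb ha)

end ParametricIntervalIntegral

lemma integral_const_mul_sub (c b : ℝ) : ∫ u in (0 : ℝ)..b, c * (b - u) = c * b ^ 2 / 2 := by
  simp only [intervalIntegral.integral_const_mul, intervalIntegral.integral_comp_sub_left fun u => u,
    sub_self, sub_zero, integral_id]
  ring

lemma ofReal_intervalIntegral_mul_sub_eq_lintegral_Ioi {f : ℝ → ℝ} {b : ℝ} (hb : 0 ≤ b)
    (hf : ∀ u, 0 ≤ f u) (hint : IntegrableOn (fun u => f u * (b - u)) (Set.Ioc 0 b)) :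
    ENNReal.ofReal (∫ u in (0 : ℝ)..b, f u * (b - u))
      = ∫⁻ u in Set.Ioi 0, ENNReal.ofReal (f u) * ENNReal.ofReal (b - u) := by
  have hvanish : ∫⁻ u in Set.Ioi b, ENNReal.ofReal (f u) * ENNReal.ofReal (b - u) = 0 :=
    setLIntegral_eq_zero measurableSet_Ioi fun u hu => by
      simp [ENNReal.ofReal_eq_zero.2 (sub_nonpos.2 (le_of_lt hu))]
  rw [← Set.Ioc_union_Ioi_eq_Ioi hb, lintegral_union measurableSet_Ioi Set.Ioc_disjoint_Ioi_same,
    hvanish, add_zero, intervalIntegral.integral_of_le hb,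
    ofReal_integral_eq_lintegral_ofReal hint]
  · exact setLIntegral_congr_fun measurableSet_Ioc fun u _ => ENNReal.ofReal_mul (hf u)
  · filter_upwards [ae_restrict_mem measurableSet_Ioc] with u hu
    exact mul_nonneg (hf u) (sub_nonneg.2 hu.2)

lemma lintegral_Ioi_ofReal_sub {b : ℝ} (hb : 0 ≤ b) :
    ∫⁻ u in Set.Ioi (0 : ℝ), ENNReal.ofReal (b - u) = ENNReal.ofReal (b ^ 2 / 2) := by
  have h := ofReal_intervalIntegral_mul_sub_eq_lintegral_Ioi hb (fun _ => zero_le_one)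
    ((continuous_const.mul (continuous_const.sub continuous_id)).integrableOn_Ioc)
  rw [integral_const_mul_sub, one_mul] at h
  simpa using h.symm

lemma norm_mul_exp_neg_mul_mul_le {x y ε c d : ℝ} (hx : 0 ≤ x) (hxc : x ≤ c) (hε : 0 ≤ ε)
    (hy : 0 ≤ y) (hd : 0 ≤ d) : ‖x * Real.exp (-ε * y) * d‖ ≤ c * d := by
  have hexp : Real.exp (-ε * y) ≤ 1 := Real.exp_le_one_iff.2 (by nlinarith)
  rw [Real.norm_of_nonneg (by positivity)]
  gcongr
  calc x * Real.exp (-ε * y) ≤ x * 1 := by gcongr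
    _ ≤ c := by linarith

section DampedIntegral

variable {f I : ℝ → ℝ} {b C : ℝ}

lemma norm_intervalIntegral_mul_exp_neg_mul_sub_le (hb : 0 ≤ b) {ε : ℝ} (hε : 0 ≤ ε)
    (hf : ∀ u, 0 ≤ f u) (hfC : ∀ u, f u ≤ C) (hI : ∀ u, 0 ≤ u → 0 ≤ I u) :
    ‖∫ u in (0 : ℝ)..b, f u * Real.exp (-ε * I u) * (b - u)‖ ≤ C * b ^ 2 / 2 := by
  rw [← integral_const_mul_sub]
  refine intervalIntegral.norm_integral_le_of_norm_le hb (ae_of_all _ fun u hu => ?_)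
    ((by fun_prop : Continuous fun u : ℝ => C * (b - u)).intervalIntegrable 0 b)
  exact norm_mul_exp_neg_mul_mul_le (hf u) (hfC u) hε (hI u hu.1.le) (sub_nonneg.2 hu.2)

lemma tendsto_intervalIntegral_mul_exp_neg_mul_sub (hb : 0 ≤ b) (hfm : Measurable f)
    (hIm : Measurable I) (hf : ∀ u, 0 ≤ f u) (hfC : ∀ u, f u ≤ C)
    (hI : ∀ u, 0 ≤ u → 0 ≤ I u) :
    Tendsto (fun ε => ∫ u in (0 : ℝ)..b, f u * Real.exp (-ε * I u) * (b - u)) (𝓝[≥] 0)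
      (𝓝 (∫ u in (0 : ℝ)..b, f u * (b - u))) := by
  refine intervalIntegral.tendsto_integral_filter_of_dominated_convergence (fun u => C * (b - u))
    (Eventually.of_forall fun ε => ?_) ?_
    ((by fun_prop : Continuous fun u : ℝ => C * (b - u)).intervalIntegrable 0 b)
    (ae_of_all _ fun u _ => ?_)
  · exact ((hfm.mul (measurable_const.mul hIm).exp).mul
      (measurable_const.sub measurable_id)).aestronglyMeasurable
  · filter_upwards [self_mem_nhdsWithin] with ε (hε : 0 ≤ ε)
    refine ae_of_all _ fun u hu => ?_
    rw [Set.uIoc_of_le hb] at hu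
    exact norm_mul_exp_neg_mul_mul_le (hf u) (hfC u) hε (hI u hu.1.le) (sub_nonneg.2 hu.2)
  · have hcont : Continuous fun ε : ℝ => f u * Real.exp (-ε * I u) * (b - u) := by fun_prop
    simpa using (hcont.tendsto 0).mono_left nhdsWithin_le_nhds

end DampedIntegral

section Independence

variable {Ω ι S β : Type*} [MeasurableSpace Ω] [MeasurableSpace S] [MeasurableSpace β]
  {P : Measure Ω} {ν : Measure S} {X : ι → Ω → S} {B : Ω → β}

lemma lintegral_comp_mul_comp_of_indepFun_process
    (hindep : IndepFun (fun ω t => X t ω) B P) {t : ι} (hXt : Measurable (X t))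
    (hlaw : P.map (X t) = ν) {g : S → ℝ≥0∞} {h : β → ℝ≥0∞} (hg : Measurable g)
    (hh : Measurable h) (hB : Measurable B) :
    ∫⁻ ω, g (X t ω) * h (B ω) ∂P = (∫⁻ x, g x ∂ν) * ∫⁻ ω, h (B ω) ∂P := by
  have hindep_t : IndepFun (fun ω => g (X t ω)) (fun ω => h (B ω)) P :=
    hindep.comp (φ := fun x : ι → S => g (x t)) (hg.comp (measurable_pi_apply t)) hh
  calc ∫⁻ ω, g (X t ω) * h (B ω) ∂P = (∫⁻ ω, g (X t ω) ∂P) * ∫⁻ ω, h (B ω) ∂P :=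
        lintegral_mul_eq_lintegral_mul_lintegral_of_indepFun (hg.comp hXt) (hh.comp hB) hindep_t
    _ = (∫⁻ x, g x ∂ν) * ∫⁻ ω, h (B ω) ∂P := by rw [← hlaw, lintegral_map hg hXt]

end Independence

section Expectation

variable {Ω S : Type*} [MeasurableSpace Ω] [MeasurableSpace S] {P : Measure Ω} [SFinite P]
  {ν : Measure S} {X : ℝ → Ω → S} {B : Ω → ℝ}

lemma lintegral_lintegral_Ioi_mul_ofReal_sub (hX : Measurable fun q : ℝ × Ω => X q.1 q.2)
    (hlaw : ∀ t, 0 ≤ t → P.map (X t) = ν) (hindep : IndepFun (fun ω t => X t ω) B P)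
    (hB : Measurable B) (hB0 : ∀ ω, 0 ≤ B ω) {g : S → ℝ≥0∞} (hg : Measurable g) :
    ∫⁻ ω, (∫⁻ u in Set.Ioi 0, g (X u ω) * ENNReal.ofReal (B ω - u)) ∂P
      = (∫⁻ x, g x ∂ν) * ∫⁻ ω, ENNReal.ofReal (B ω ^ 2 / 2) ∂P := by
  have hsub : Measurable fun q : ℝ × Ω => ENNReal.ofReal (B q.2 - q.1) := by fun_prop
  calc
    _ = ∫⁻ u in Set.Ioi 0, ∫⁻ ω, g (X u ω) * ENNReal.ofReal (B ω - u) ∂P :=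
      lintegral_lintegral_swap
        ((hg.comp (hX.comp measurable_swap)).mul (hsub.comp measurable_swap)).aemeasurable
    _ = ∫⁻ u in Set.Ioi 0, (∫⁻ x, g x ∂ν) * ∫⁻ ω, ENNReal.ofReal (B ω - u) ∂P :=
      setLIntegral_congr_fun measurableSet_Ioi fun u hu =>
        lintegral_comp_mul_comp_of_indepFun_process hindep (hX.comp measurable_prodMk_left)
          (hlaw u (le_of_lt hu)) hg (h := fun b => ENNReal.ofReal (b - u)) (by fun_prop) hB
    _ = (∫⁻ x, g x ∂ν) * ∫⁻ u in Set.Ioi 0, ∫⁻ ω, ENNReal.ofReal (B ω - u) ∂P :=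
      lintegral_const_mul _ hsub.lintegral_prod_right'
    _ = _ := by
      rw [lintegral_lintegral_swap hsub.aemeasurable]
      exact congrArg _ (lintegral_congr fun ω => lintegral_Ioi_ofReal_sub (hB0 ω))

lemma integral_intervalIntegral_mul_sub_eq (hX : Measurable fun q : ℝ × Ω => X q.1 q.2)
    (hlaw : ∀ t, 0 ≤ t → P.map (X t) = ν) (hindep : IndepFun (fun ω t => X t ω) B P)
    (hB : Measurable B) (hB0 : ∀ ω, 0 ≤ B ω) {p : S → ℝ} (hp : Measurable p)
    (hp0 : ∀ x, 0 ≤ p x) {C : ℝ} (hpC : ∀ x, p x ≤ C) :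
    ∫ ω, (∫ u in (0 : ℝ)..B ω, p (X u ω) * (B ω - u)) ∂P
      = (∫ x, p x ∂ν) * (∫ ω, B ω ^ 2 ∂P) / 2 := by
  have hpX : Measurable fun q : ℝ × Ω => p (X q.1 q.2) := hp.comp hX
  have hG : StronglyMeasurable fun ω => ∫ u in (0 : ℝ)..B ω, p (X u ω) * (B ω - u) :=
    stronglyMeasurable_intervalIntegral (f := fun ω u => p (X u ω) * (B ω - u))
      ((hpX.comp measurable_swap).mul (by fun_prop)) measurable_const hB
  have hG0 : ∀ ω, 0 ≤ ∫ u in (0 : ℝ)..B ω, p (X u ω) * (B ω - u) := fun ω =>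
    intervalIntegral.integral_nonneg (hB0 ω) fun u hu => mul_nonneg (hp0 _) (sub_nonneg.2 hu.2)
  have hint : ∀ ω, IntegrableOn (fun u => p (X u ω) * (B ω - u)) (Set.Ioc 0 (B ω)) := fun ω =>
    (by fun_prop : Continuous fun u : ℝ => B ω - u).integrableOn_Ioc.bdd_mul
      (hpX.comp measurable_prodMk_right).aestronglyMeasurable
      (ae_of_all _ fun u => by rw [Real.norm_of_nonneg (hp0 _)]; exact hpC _)
  rw [integral_eq_lintegral_of_nonneg_ae (ae_of_all _ hG0) hG.aestronglyMeasurable,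
    integral_eq_lintegral_of_nonneg_ae (ae_of_all _ hp0) hp.aestronglyMeasurable, mul_div_assoc,
    ← integral_div, integral_eq_lintegral_of_nonneg_ae (ae_of_all _ fun ω => by positivity)
      (by fun_prop), ← ENNReal.toReal_mul,
    ← lintegral_lintegral_Ioi_mul_ofReal_sub hX hlaw hindep hB hB0 hp.ennreal_ofReal]
  exact congrArg ENNReal.toReal (lintegral_congr fun ω =>
    ofReal_intervalIntegral_mul_sub_eq_lintegral_Ioi (hB0 ω) (fun _ => hp0 _) (hint ω))

end Expectation

theorem stmt_10_general {Ω S : Type*} [MeasurableSpace Ω] [MeasurableSpace S]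
    (P : Measure Ω) [IsProbabilityMeasure P]
    (ν : Measure S)
    (X : ℝ → Ω → S) (hXmeas : Measurable fun q : ℝ × Ω => X q.1 q.2)
    (hXlaw : ∀ t : ℝ, 0 ≤ t → P.map (X t) = ν)
    (p : S → ℝ) (hpmeas : Measurable p) (hpnonneg : ∀ x, 0 ≤ p x)
    (C : ℝ) (hpbdd : ∀ x, p x ≤ C)
    (B : Ω → ℝ) (hBmeas : Measurable B) (hBnonneg : ∀ ω, 0 ≤ B ω)
    (hB2 : Integrable (fun ω => B ω ^ 2) P)
    (hindep : Indep (MeasurableSpace.comap B inferInstance)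
      (MeasurableSpace.comap (fun ω (t : ℝ) => X t ω) MeasurableSpace.pi) P) :
    Tendsto (fun ε : ℝ =>
        ∫ ω, (∫ u in (0 : ℝ)..(B ω),
          p (X u ω) * Real.exp (-ε * ∫ s in (0 : ℝ)..u, p (X s ω)) * (B ω - u)) ∂P)
      (𝓝[>] (0 : ℝ)) (𝓝 ((∫ x, p x ∂ν) * (∫ ω, B ω ^ 2 ∂P) / 2)) := by
  have hpX : Measurable fun q : ℝ × Ω => p (X q.1 q.2) := hpmeas.comp hXmeas
  have hclock : Measurable fun q : ℝ × Ω => ∫ s in (0 : ℝ)..q.1, p (X s q.2) :=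
    (stronglyMeasurable_intervalIntegral (f := fun (q : ℝ × Ω) s => p (X s q.2))
      (hpX.comp (measurable_snd.prodMk measurable_fst.snd)) measurable_const
      measurable_fst).measurable
  have hclock0 : ∀ ω u, 0 ≤ u → 0 ≤ ∫ s in (0 : ℝ)..u, p (X s ω) := fun _ _ hu =>
    intervalIntegral.integral_nonneg hu fun _ _ => hpnonneg _
  rw [← integral_intervalIntegral_mul_sub_eq hXmeas hXlaw
    ((IndepFun_iff_Indep _ _ _).2 hindep.symm) hBmeas hBnonneg hpmeas hpnonneg hpbdd]
  refine tendsto_integral_filter_of_dominated_convergence (fun ω => C * B ω ^ 2 / 2)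
    (Eventually.of_forall fun ε => ?_) ?_ ((hB2.const_mul C).div_const 2)
    (ae_of_all _ fun ω => ?_)
  · refine (stronglyMeasurable_intervalIntegral (f := fun ω u =>
      p (X u ω) * Real.exp (-ε * ∫ s in (0 : ℝ)..u, p (X s ω)) * (B ω - u))
      ?_ measurable_const hBmeas).aestronglyMeasurable
    exact ((hpX.comp measurable_swap).mul
      (measurable_const.mul (hclock.comp measurable_swap)).exp).mul (by fun_prop)
  · filter_upwards [self_mem_nhdsWithin] with ε (hε : 0 < ε)
    exact ae_of_all _ fun ω => norm_intervalIntegral_mul_exp_neg_mul_sub_le (hBnonneg ω) hε.le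
      (fun _ => hpnonneg _) (fun _ => hpbdd _) (hclock0 ω)
  · exact (tendsto_intervalIntegral_mul_exp_neg_mul_sub (hBnonneg ω)
      (hpX.comp measurable_prodMk_right) (hclock.comp measurable_prodMk_right)
      (fun _ => hpnonneg _) (fun _ => hpbdd _) (hclock0 ω)).mono_left
      (nhdsWithin_mono _ Set.Ioi_subset_Ici_self)

/-- Let `p : S → [0,∞)` be bounded measurable and let `B` be a nonnegative random variable with
`E[B^2] < ∞`, independent of the process `X`. Then
`lim_{ε → 0+} E[∫_0^B p(X(u)) exp(−ε ∫_0^u p(X(s)) ds) (B − u) du] = (∫_S p dν) ⬝ E[B^2]/2`. -/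
theorem stmt_10 {Ω S : Type*} [MeasurableSpace Ω] [MeasurableSpace S]
    (P : Measure Ω) [IsProbabilityMeasure P]
    (ν : Measure S) [IsProbabilityMeasure ν]
    (X : ℝ → Ω → S) (hXmeas : Measurable fun q : ℝ × Ω => X q.1 q.2)
    (hXlaw : ∀ t : ℝ, 0 ≤ t → P.map (X t) = ν)
    (p : S → ℝ) (hpmeas : Measurable p) (hpnonneg : ∀ x, 0 ≤ p x)
    (C : ℝ) (hpbdd : ∀ x, p x ≤ C)
    (B : Ω → ℝ) (hBmeas : Measurable B) (hBnonneg : ∀ ω, 0 ≤ B ω)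
    (hB2 : Integrable (fun ω => B ω ^ 2) P)
    (hindep : Indep (MeasurableSpace.comap B inferInstance)
      (MeasurableSpace.comap (fun ω (t : ℝ) => X t ω) MeasurableSpace.pi) P) :
    Tendsto (fun ε : ℝ =>
        ∫ ω, (∫ u in (0 : ℝ)..(B ω),
          p (X u ω) * Real.exp (-ε * ∫ s in (0 : ℝ)..u, p (X s ω)) * (B ω - u)) ∂P)
      (𝓝[>] (0 : ℝ)) (𝓝 ((∫ x, p x ∂ν) * (∫ ω, B ω ^ 2 ∂P) / 2)) :=
  stmt_10_general P ν X hXmeas hXlaw p hpmeas hpnonneg C hpbdd B hBmeas hBnonneg hB2 hindep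
end
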